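/- arXiv:1410.2513 — 2 statements merged into one kernel-verified Lean document; each statement's English description precedes it below -/
import Mathlib

section
/- A cyclic surface in Sol₃ foliated by horocycles of the form X(s,t) = (s, t, a(s)), where a : I → ℝ is twice continuously differentiable on a nonempty open interval I and t ranges over ℝ, has zero mean curvature if and only if a''(s) = a'(s)² on I, which holds if and only if s ↦ e^{−a(s)} is affine, i.e. there exist λ, μ ∈ ℝ with e^{−a(s)} = λ·s + μ for all s ∈ I. -/
open Real

noncomputable section

/-- Tangent/ambient vectors of Sol₃ modeled on ℝ³. -/
abbrev V3 : Type := ℝ × ℝ × ℝ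

/-- The Sol₃ metric at a point `p = (x,y,z)`:
`g_p(u,v) = e^{2z}u₁v₁ + e^{-2z}u₂v₂ + u₃v₃`. -/
def gSol (p u v : V3) : ℝ :=
  exp (2 * p.2.2) * u.1 * v.1 + exp (-(2 * p.2.2)) * u.2.1 * v.2.1 + u.2.2 * v.2.2

/-- The Christoffel bilinear map of the Sol₃ metric at a point `p`. -/
def GammaSol (p u v : V3) : V3 :=
  (u.1 * v.2.2 + u.2.2 * v.1,
   -(u.2.1 * v.2.2 + u.2.2 * v.2.1),
   -exp (2 * p.2.2) * u.1 * v.1 + exp (-(2 * p.2.2)) * u.2.1 * v.2.1)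

/-- Partial derivative of a parametrized surface with respect to the first parameter. -/
def pXs (X : ℝ → ℝ → V3) (s t : ℝ) : V3 := deriv (fun s' => X s' t) s

/-- Partial derivative of a parametrized surface with respect to the second parameter. -/
def pXt (X : ℝ → ℝ → V3) (s t : ℝ) : V3 := deriv (fun t' => X s t') t

/-- Ambient second-order quantity `S_ss = X_ss + Γ_X(X_s, X_s)`. -/
def Sss (X : ℝ → ℝ → V3) (s t : ℝ) : V3 :=
  deriv (fun s' => pXs X s' t) s + GammaSol (X s t) (pXs X s t) (pXs X s t)

/-- Ambient second-order quantity `S_st = X_st + Γ_X(X_s, X_t)`. -/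
def Sst (X : ℝ → ℝ → V3) (s t : ℝ) : V3 :=
  deriv (fun t' => pXs X s t') t + GammaSol (X s t) (pXs X s t) (pXt X s t)

/-- Ambient second-order quantity `S_tt = X_tt + Γ_X(X_t, X_t)`. -/
def Stt (X : ℝ → ℝ → V3) (s t : ℝ) : V3 :=
  deriv (fun t' => pXt X s t') t + GammaSol (X s t) (pXt X s t) (pXt X s t)

/-- `X : I × J → Sol₃` has zero mean curvature:
for every point of `I × J` and every normal vector `n`,
`E·g(S_tt,n) - 2F·g(S_st,n) + G·g(S_ss,n) = 0`. -/
def MeanZero (I J : Set ℝ) (X : ℝ → ℝ → V3) : Prop :=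
  ∀ s ∈ I, ∀ t ∈ J, ∀ n : V3,
    gSol (X s t) n (pXs X s t) = 0 → gSol (X s t) n (pXt X s t) = 0 →
    gSol (X s t) (pXs X s t) (pXs X s t) * gSol (X s t) (Stt X s t) n
      - 2 * gSol (X s t) (pXs X s t) (pXt X s t) * gSol (X s t) (Sst X s t) n
      + gSol (X s t) (pXt X s t) (pXt X s t) * gSol (X s t) (Sss X s t) n = 0

/-- `X : I × J → Sol₃` has zero Gaussian curvature:
for every point of `I × J` and every normal vector `n`,
`g(S_ss,n)·g(S_tt,n) - g(S_st,n)² = 0`. -/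
def GaussZero (I J : Set ℝ) (X : ℝ → ℝ → V3) : Prop :=
  ∀ s ∈ I, ∀ t ∈ J, ∀ n : V3,
    gSol (X s t) n (pXs X s t) = 0 → gSol (X s t) n (pXt X s t) = 0 →
    gSol (X s t) (Sss X s t) n * gSol (X s t) (Stt X s t) n
      - (gSol (X s t) (Sst X s t) n) ^ 2 = 0
/-!
Along `X(s,t) = (s, t, a s)` one has `X_s = (1, 0, a')` and `X_t = (0, 1, 0)`, so `F = 0`, and on
every normal `n` the mean-curvature form collapses to `e^{-2a} n₃ (a'' - a'²)`; the normal
`(a', 0, -e^{2a})` has `n₃ ≠ 0`. Since `(e^{-a})'' = (a'² - a'') e^{-a}`, the equation `a'' = a'²`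
says that `e^{-a}` has vanishing second derivative, i.e. is affine on the interval `I`.
-/

open Filter Topology

theorem IsOpen.exists_eq_mul_add_of_deriv_deriv_eq_zero {𝕜 : Type*} [RCLike 𝕜] {s : Set 𝕜}
    {f : 𝕜 → 𝕜} (hs : IsOpen s) (hs' : IsPreconnected s) (hf : DifferentiableOn 𝕜 f s)
    (hf' : DifferentiableOn 𝕜 (deriv f) s) (hf'' : s.EqOn (deriv (deriv f)) 0) :
    ∃ c d, ∀ x ∈ s, f x = c * x + d := by
  obtain ⟨c, hc⟩ := hs.exists_is_const_of_deriv_eq_zero hs' hf' hf''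
  obtain ⟨d, hd⟩ := hs.exists_eq_add_of_deriv_eq (g := (c * ·)) hs' hf
    (differentiableOn_id.const_mul c) fun x hx => by simp [hc x hx]
  exact ⟨c, d, hd⟩

theorem IsOpen.deriv_deriv_eq_zero_of_eq_mul_add {𝕜 : Type*} [RCLike 𝕜] {s : Set 𝕜}
    {f : 𝕜 → 𝕜} {c d : 𝕜} (hs : IsOpen s) (hf : ∀ x ∈ s, f x = c * x + d) :
    s.EqOn (deriv (deriv f)) 0 := by
  intro x hx
  have hderiv : deriv f =ᶠ[𝓝 x] fun _ => c := by
    filter_upwards [hs.mem_nhds hx] with y hy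
    rw [(eventuallyEq_of_mem (hs.mem_nhds hy) hf).deriv_eq]
    simp
  simp [hderiv.deriv_eq]

theorem ContDiffOn.eventually_differentiableAt_and_differentiableAt_deriv {a : ℝ → ℝ}
    {I : Set ℝ} {s : ℝ} (ha : ContDiffOn ℝ 2 a I) (hI : IsOpen I) (hs : s ∈ I) :
    (∀ᶠ x in 𝓝 s, DifferentiableAt ℝ a x) ∧ DifferentiableAt ℝ (deriv a) s :=
  ⟨eventually_of_mem (hI.mem_nhds hs) fun x hx =>
      (ha.differentiableOn (by norm_num) x hx).differentiableAt (hI.mem_nhds hx),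
    ((ha.deriv_of_isOpen hI (m := 1) (by norm_num)).differentiableOn one_ne_zero s hs
      ).differentiableAt (hI.mem_nhds hs)⟩

theorem deriv_deriv_exp_neg {a : ℝ → ℝ} {s : ℝ} (ha : ∀ᶠ x in 𝓝 s, DifferentiableAt ℝ a x)
    (ha' : DifferentiableAt ℝ (deriv a) s) :
    deriv (deriv fun x => exp (-a x)) s = (deriv a s ^ 2 - deriv (deriv a) s) * exp (-a s) := by
  have hderiv : deriv (fun x => exp (-a x)) =ᶠ[𝓝 s] fun x => -deriv a x * exp (-a x) := by
    filter_upwards [ha] with x hx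
    rw [_root_.deriv_exp hx.fun_neg, deriv.fun_neg]
    ring
  rw [hderiv.deriv_eq, deriv_fun_mul ha'.fun_neg ha.self_of_nhds.fun_neg.exp, deriv.fun_neg,
    _root_.deriv_exp ha.self_of_nhds.fun_neg, deriv.fun_neg]
  ring

theorem deriv_deriv_eq_sq_iff_exists_exp_neg_eq {a : ℝ → ℝ} {I : Set ℝ} (hI : IsOpen I)
    (hI' : IsPreconnected I) (ha : ContDiffOn ℝ 2 a I) :
    (∀ s ∈ I, deriv (deriv a) s = deriv a s ^ 2) ↔
      ∃ lam mu : ℝ, ∀ s ∈ I, exp (-a s) = lam * s + mu := by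
  have hexp : ContDiffOn ℝ 2 (fun x => exp (-a x)) I := ha.neg.exp
  have hiff : ∀ s ∈ I,
      deriv (deriv a) s = deriv a s ^ 2 ↔ deriv (deriv fun x => exp (-a x)) s = 0 := by
    intro s hs
    obtain ⟨ha₁, ha₂⟩ := ha.eventually_differentiableAt_and_differentiableAt_deriv hI hs
    rw [deriv_deriv_exp_neg ha₁ ha₂, mul_eq_zero, or_iff_left (exp_ne_zero _), sub_eq_zero,
      eq_comm]
  constructor
  · intro h
    exact hI.exists_eq_mul_add_of_deriv_deriv_eq_zero hI' (hexp.differentiableOn two_ne_zero)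
      ((hexp.deriv_of_isOpen hI (m := 1) (by norm_num)).differentiableOn one_ne_zero)
      fun s hs => (hiff s hs).1 (h s hs)
  · rintro ⟨lam, mu, h⟩ s hs
    exact (hiff s hs).2 (hI.deriv_deriv_eq_zero_of_eq_mul_add h hs)

abbrev horocycleSurface (a : ℝ → ℝ) : ℝ → ℝ → V3 := fun s t => (s, t, a s)

def meanCurvatureForm (X : ℝ → ℝ → V3) (s t : ℝ) (n : V3) : ℝ :=
  gSol (X s t) (pXs X s t) (pXs X s t) * gSol (X s t) (Stt X s t) n
    - 2 * gSol (X s t) (pXs X s t) (pXt X s t) * gSol (X s t) (Sst X s t) n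
    + gSol (X s t) (pXt X s t) (pXt X s t) * gSol (X s t) (Sss X s t) n

namespace horocycleSurface

variable {a : ℝ → ℝ} {s : ℝ}

theorem pXs_eq (ha : DifferentiableAt ℝ a s) (t : ℝ) :
    pXs (horocycleSurface a) s t = (1, 0, deriv a s) :=
  ((hasDerivAt_id s).prodMk ((hasDerivAt_const s t).prodMk ha.hasDerivAt)).deriv

theorem pXt_eq (a : ℝ → ℝ) (s t : ℝ) : pXt (horocycleSurface a) s t = (0, 1, 0) :=
  ((hasDerivAt_const t s).prodMk ((hasDerivAt_id t).prodMk (hasDerivAt_const t (a s)))).deriv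

theorem Sss_eq (ha : ∀ᶠ x in 𝓝 s, DifferentiableAt ℝ a x)
    (ha' : DifferentiableAt ℝ (deriv a) s) (t : ℝ) :
    Sss (horocycleSurface a) s t = (2 * deriv a s, 0, deriv (deriv a) s - exp (2 * a s)) := by
  have hXs : (fun x => pXs (horocycleSurface a) x t) =ᶠ[𝓝 s] fun x => (1, 0, deriv a x) := by
    filter_upwards [ha] with x hx using pXs_eq hx t
  have hXss : deriv (fun x => pXs (horocycleSurface a) x t) s = (0, 0, deriv (deriv a) s) := by
    rw [hXs.deriv_eq]
    exact ((hasDerivAt_const s 1).prodMk ((hasDerivAt_const s 0).prodMk ha'.hasDerivAt)).deriv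
  simp only [Sss, hXss, pXs_eq ha.self_of_nhds, GammaSol]
  ext <;> simp <;> ring

theorem Sst_eq (ha : DifferentiableAt ℝ a s) (t : ℝ) :
    Sst (horocycleSurface a) s t = (0, -deriv a s, 0) := by
  simp [Sst, pXs_eq ha, pXt_eq, GammaSol]

theorem Stt_eq (a : ℝ → ℝ) (s t : ℝ) :
    Stt (horocycleSurface a) s t = (0, 0, exp (-(2 * a s))) := by
  simp [Stt, pXt_eq, GammaSol]

theorem meanCurvatureForm_eq (ha : ∀ᶠ x in 𝓝 s, DifferentiableAt ℝ a x)
    (ha' : DifferentiableAt ℝ (deriv a) s) {t : ℝ} {n : V3}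
    (hn : gSol (horocycleSurface a s t) n (pXs (horocycleSurface a) s t) = 0) :
    meanCurvatureForm (horocycleSurface a) s t n =
      exp (-(2 * a s)) * n.2.2 * (deriv (deriv a) s - deriv a s ^ 2) := by
  rw [pXs_eq ha.self_of_nhds] at hn
  simp only [meanCurvatureForm, pXs_eq ha.self_of_nhds, pXt_eq, Sss_eq ha ha',
    Sst_eq ha.self_of_nhds, Stt_eq, gSol] at hn ⊢
  linear_combination 2 * deriv a s * exp (-(2 * a s)) * hn

theorem meanZero_iff {I J : Set ℝ} (hI : IsOpen I) (hJ : J.Nonempty) (ha : ContDiffOn ℝ 2 a I) :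
    MeanZero I J (horocycleSurface a) ↔ ∀ s ∈ I, deriv (deriv a) s = deriv a s ^ 2 := by
  constructor
  · intro h s hs
    obtain ⟨t, ht⟩ := hJ
    obtain ⟨ha₁, ha₂⟩ := ha.eventually_differentiableAt_and_differentiableAt_deriv hI hs
    set n : V3 := (deriv a s, 0, -exp (2 * a s))
    have hn₁ : gSol (horocycleSurface a s t) n (pXs (horocycleSurface a) s t) = 0 := by
      rw [pXs_eq ha₁.self_of_nhds]
      simp only [gSol, n]
      ring
    have hn₂ : gSol (horocycleSurface a s t) n (pXt (horocycleSurface a) s t) = 0 := by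
      simp [gSol, n, pXt_eq]
    have hform : meanCurvatureForm (horocycleSurface a) s t n = 0 := h s hs t ht n hn₁ hn₂
    rw [meanCurvatureForm_eq ha₁ ha₂ hn₁] at hform
    simpa [n, exp_ne_zero, sub_eq_zero] using hform
  · intro h s hs t _ n hn₁ _
    obtain ⟨ha₁, ha₂⟩ := ha.eventually_differentiableAt_and_differentiableAt_deriv hI hs
    change meanCurvatureForm (horocycleSurface a) s t n = 0
    rw [meanCurvatureForm_eq ha₁ ha₂ hn₁, h s hs, sub_self, mul_zero]

end horocycleSurface

theorem minimal_foliated_by_horocycles_general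
    (I : Set ℝ) (hIo : IsOpen I) (hIc : I.OrdConnected)
    (a : ℝ → ℝ) (ha : ContDiffOn ℝ 2 a I) :
    (MeanZero I Set.univ (fun s t => (s, t, a s)) ↔
      ∀ s ∈ I, deriv (deriv a) s = (deriv a s) ^ 2) ∧
    ((∀ s ∈ I, deriv (deriv a) s = (deriv a s) ^ 2) ↔
      ∃ lam mu : ℝ, ∀ s ∈ I, exp (-a s) = lam * s + mu) :=
  ⟨horocycleSurface.meanZero_iff hIo Set.univ_nonempty ha,
    deriv_deriv_eq_sq_iff_exists_exp_neg_eq hIo hIc.isPreconnected ha⟩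

/-- The cyclic surface `X(s,t) = (s, t, a(s))` foliated by horocycles
has zero mean curvature iff `a'' = a'²` on `I`, iff `e^{-a}` is affine. -/
theorem minimal_foliated_by_horocycles
    (I : Set ℝ) (hIo : IsOpen I) (hIne : I.Nonempty) (hIc : I.OrdConnected)
    (a : ℝ → ℝ) (ha : ContDiffOn ℝ 2 a I) :
    (MeanZero I Set.univ (fun s t => (s, t, a s)) ↔
      ∀ s ∈ I, deriv (deriv a) s = (deriv a s) ^ 2) ∧
    ((∀ s ∈ I, deriv (deriv a) s = (deriv a s) ^ 2) ↔
      ∃ lam mu : ℝ, ∀ s ∈ I, exp (-a s) = lam * s + mu) :=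
  minimal_foliated_by_horocycles_general I hIo hIc a ha
end
end

section
/- A surface in Sol₃ of the form X(s,t) = (s, t, log b(s)), where b : I → ℝ is twice continuously differentiable and positive on a nonempty open interval I and t ranges over ℝ, has zero Gaussian curvature if and only if there exist λ, μ ∈ ℝ with 1/b(s)² = −s² + λ·s + μ for all s ∈ I (so b(s) = ±1/√(−s² + λs + μ)). Equivalently, the Gaussian curvature vanishes identically if and only if b(s)⁴ + 3·b'(s)² − b(s)·b''(s) = 0 on I. -/
open Real

noncomputable section

/-!
Along `X(s, t) = (s, t, log b(s))` one has `X_s = (1, 0, b'/b)`, `X_t = (0, 1, 0)`,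
`S_st = (0, -b'/b, 0)` and `S_tt = (0, 0, b⁻²)`. The normal line is spanned by `(-b', 0, b³)`,
so `g(S_st, n) = 0` and the Gauss form collapses to `-(n₃/b²)² (b⁴ + 3b'² - b b'')`.
For `u = 1/b²` one computes `u'' = -2 (b b'' - 3b'²)/b⁴`, so the same ODE says exactly that
`u'' = -2`, i.e. that `u` is `-s² + λs + μ` on the interval.
-/

open Filter Topology

theorem exp_two_mul_log {x : ℝ} (hx : x ≠ 0) : exp (2 * log x) = x ^ 2 := by
  rw [← Nat.cast_ofNat, ← log_pow, exp_log (pow_two_pos_of_ne_zero hx)]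

theorem hasDerivAt_quadratic (a lam x : ℝ) :
    HasDerivAt (fun x => a * x ^ 2 + lam * x) (2 * a * x + lam) x := by
  refine (((hasDerivAt_pow 2 x).const_mul a).add ((hasDerivAt_id x).const_mul lam)).congr_deriv ?_
  norm_num
  ring

theorem IsOpen.second_deriv_eq_const_iff_exists_quadratic {I : Set ℝ} {f f' f'' : ℝ → ℝ} (a : ℝ)
    (hIo : IsOpen I) (hIc : IsPreconnected I) (hf : ∀ x ∈ I, HasDerivAt f (f' x) x)
    (hf' : ∀ x ∈ I, HasDerivAt f' (f'' x) x) :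
    (∀ x ∈ I, f'' x = 2 * a) ↔ ∃ lam mu : ℝ, ∀ x ∈ I, f x = a * x ^ 2 + lam * x + mu := by
  constructor
  · intro h
    obtain ⟨lam, hlam⟩ := hIo.exists_eq_add_of_deriv_eq hIc (g := fun x => 2 * a * x)
      (fun x hx => (hf' x hx).differentiableAt.differentiableWithinAt) (by fun_prop)
      (fun x hx => by simp [(hf' x hx).deriv, h x hx])
    obtain ⟨mu, hmu⟩ := hIo.exists_eq_add_of_deriv_eq hIc (g := fun x => a * x ^ 2 + lam * x)
      (fun x hx => (hf x hx).differentiableAt.differentiableWithinAt) (by fun_prop)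
      (fun x hx => by rw [(hf x hx).deriv, hlam hx, (hasDerivAt_quadratic a lam x).deriv])
    exact ⟨lam, mu, hmu⟩
  · rintro ⟨lam, mu, hq⟩
    have hf'_eq : ∀ x ∈ I, f' x = 2 * a * x + lam := fun x hx =>
      (hf x hx).unique <| (hasDerivAt_quadratic a lam x).add_const mu |>.congr_of_eventuallyEq <|
        eventually_of_mem (hIo.mem_nhds hx) hq
    intro x hx
    refine (hf' x hx).unique ?_
    simpa using ((hasDerivAt_id x).const_mul (2 * a)).add_const lam |>.congr_of_eventuallyEq <|
        eventually_of_mem (hIo.mem_nhds hx) hf'_eq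

theorem ContDiffOn.differentiableAt_deriv_of_isOpen {𝕜 F : Type*} [NontriviallyNormedField 𝕜]
    [NormedAddCommGroup F] [NormedSpace 𝕜 F] {f : 𝕜 → F} {s : Set 𝕜} {x : 𝕜}
    (hf : ContDiffOn 𝕜 2 f s) (hs : IsOpen s) (hx : x ∈ s) : DifferentiableAt 𝕜 (deriv f) x :=
  ((hf.deriv_of_isOpen hs (by norm_num)).contDiffAt (hs.mem_nhds hx)).differentiableAt one_ne_zero

def equidistantSurface (b : ℝ → ℝ) (s t : ℝ) : V3 := (s, t, log (b s))

namespace equidistantSurface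

variable {b : ℝ → ℝ} {s : ℝ}

theorem gSol_eq (hs : b s ≠ 0) (t : ℝ) (u v : V3) :
    gSol (equidistantSurface b s t) u v =
      b s ^ 2 * u.1 * v.1 + (b s ^ 2)⁻¹ * u.2.1 * v.2.1 + u.2.2 * v.2.2 := by
  simp only [gSol, equidistantSurface, exp_neg, exp_two_mul_log hs]

theorem pXs_eq (hb : DifferentiableAt ℝ b s) (hs : b s ≠ 0) (t : ℝ) :
    pXs (equidistantSurface b) s t = (1, 0, deriv b s / b s) :=
  ((hasDerivAt_id s).prodMk ((hasDerivAt_const s t).prodMk (hb.hasDerivAt.log hs))).deriv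

theorem pXt_eq (s t : ℝ) : pXt (equidistantSurface b) s t = (0, 1, 0) :=
  ((hasDerivAt_const t s).prodMk ((hasDerivAt_id t).prodMk (hasDerivAt_const t _))).deriv

theorem Sss_eq (hb : ∀ᶠ x in 𝓝 s, DifferentiableAt ℝ b x ∧ b x ≠ 0)
    (hb' : DifferentiableAt ℝ (deriv b) s) (t : ℝ) :
    Sss (equidistantSurface b) s t =
      (2 * (deriv b s / b s), 0,
        (deriv (deriv b) s * b s - deriv b s * deriv b s) / b s ^ 2 - b s ^ 2) := by
  obtain ⟨hbs, hs⟩ := hb.self_of_nhds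
  have hXs : (fun x => pXs (equidistantSurface b) x t) =ᶠ[𝓝 s]
      fun x => ((1 : ℝ), (0 : ℝ), deriv b x / b x) :=
    hb.mono fun x hx => pXs_eq hx.1 hx.2 t
  have hXss : deriv (fun x => pXs (equidistantSurface b) x t) s =
      (0, 0, (deriv (deriv b) s * b s - deriv b s * deriv b s) / b s ^ 2) := by
    rw [hXs.deriv_eq]
    exact ((hasDerivAt_const s _).prodMk
      ((hasDerivAt_const s _).prodMk (hb'.hasDerivAt.div hbs.hasDerivAt hs))).deriv
  rw [Sss, hXss, pXs_eq hbs hs]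
  ext <;> simp [GammaSol, equidistantSurface, exp_two_mul_log hs] <;> ring

theorem Sst_eq (hb : DifferentiableAt ℝ b s) (hs : b s ≠ 0) (t : ℝ) :
    Sst (equidistantSurface b) s t = (0, -(deriv b s / b s), 0) := by
  have hXst : deriv (fun t' => pXs (equidistantSurface b) s t') t = 0 := by
    simp only [pXs_eq hb hs, deriv_const]
  rw [Sst, hXst, pXs_eq hb hs, pXt_eq]
  ext <;> simp [GammaSol]

theorem Stt_eq (hs : b s ≠ 0) (t : ℝ) :
    Stt (equidistantSurface b) s t = (0, 0, (b s ^ 2)⁻¹) := by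
  have hXtt : deriv (fun t' => pXt (equidistantSurface b) s t') t = 0 := by
    simp only [pXt_eq, deriv_const]
  rw [Stt, hXtt, pXt_eq]
  ext <;> simp [GammaSol, equidistantSurface, exp_neg, exp_two_mul_log hs]

theorem gSol_Sss_mul_Stt_sub_sq (hb : ∀ᶠ x in 𝓝 s, DifferentiableAt ℝ b x ∧ b x ≠ 0)
    (hb' : DifferentiableAt ℝ (deriv b) s) (t : ℝ) {n : V3}
    (hn₁ : gSol (equidistantSurface b s t) n (pXs (equidistantSurface b) s t) = 0)
    (hn₂ : gSol (equidistantSurface b s t) n (pXt (equidistantSurface b) s t) = 0) :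
    gSol (equidistantSurface b s t) (Sss (equidistantSurface b) s t) n *
        gSol (equidistantSurface b s t) (Stt (equidistantSurface b) s t) n -
      gSol (equidistantSurface b s t) (Sst (equidistantSurface b) s t) n ^ 2 =
      -(n.2.2 / b s ^ 2) ^ 2 * (b s ^ 4 + 3 * deriv b s ^ 2 - b s * deriv (deriv b) s) := by
  obtain ⟨hbs, hs⟩ := hb.self_of_nhds
  obtain ⟨n₁, n₂, n₃⟩ := n
  rw [gSol_eq hs, pXs_eq hbs hs] at hn₁
  rw [gSol_eq hs, pXt_eq] at hn₂
  have hn₂' : n₂ = 0 := by simpa [hs] using hn₂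
  subst hn₂'
  simp only [gSol_eq hs, Sss_eq hb hb', Sst_eq hbs hs, Stt_eq hs]
  field_simp at hn₁ ⊢
  linear_combination (2 * b s * deriv b s * n₃) * hn₁

end equidistantSurface

section

variable {I : Set ℝ} {b : ℝ → ℝ}

theorem gaussZero_equidistantSurface_iff {J : Set ℝ} (hIo : IsOpen I) (hb : ContDiffOn ℝ 2 b I)
    (hb0 : ∀ s ∈ I, b s ≠ 0) (hJ : J.Nonempty) :
    GaussZero I J (equidistantSurface b) ↔
      ∀ s ∈ I, b s ^ 4 + 3 * deriv b s ^ 2 - b s * deriv (deriv b) s = 0 := by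
  have hb₁ : ∀ s ∈ I, ∀ᶠ x in 𝓝 s, DifferentiableAt ℝ b x ∧ b x ≠ 0 := fun s hs =>
    eventually_of_mem (hIo.mem_nhds hs) fun x hx =>
      ⟨(hb.contDiffAt (hIo.mem_nhds hx)).differentiableAt two_ne_zero, hb0 x hx⟩
  have hb₂ : ∀ s ∈ I, DifferentiableAt ℝ (deriv b) s := fun s hs =>
    hb.differentiableAt_deriv_of_isOpen hIo hs
  constructor
  · intro hG s hs
    obtain ⟨t, ht⟩ := hJ
    obtain ⟨hbs, hs0⟩ := (hb₁ s hs).self_of_nhds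
    have hn₁ : gSol (equidistantSurface b s t) (-deriv b s, 0, b s ^ 3)
        (pXs (equidistantSurface b) s t) = 0 := by
      rw [equidistantSurface.gSol_eq hs0, equidistantSurface.pXs_eq hbs hs0]
      field_simp
      ring
    have hn₂ : gSol (equidistantSurface b s t) (-deriv b s, 0, b s ^ 3)
        (pXt (equidistantSurface b) s t) = 0 := by
      simp [equidistantSurface.gSol_eq hs0, equidistantSurface.pXt_eq]
    have h := hG s hs t ht _ hn₁ hn₂
    rw [equidistantSurface.gSol_Sss_mul_Stt_sub_sq (hb₁ s hs) (hb₂ s hs) t hn₁ hn₂] at h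
    simpa [hs0] using h
  · intro hode s hs t _ n hn₁ hn₂
    rw [equidistantSurface.gSol_Sss_mul_Stt_sub_sq (hb₁ s hs) (hb₂ s hs) t hn₁ hn₂, hode s hs,
      mul_zero]

theorem exists_one_div_sq_eq_quadratic_iff (hIo : IsOpen I) (hIc : IsPreconnected I)
    (hb : ContDiffOn ℝ 2 b I) (hb0 : ∀ s ∈ I, b s ≠ 0) :
    (∃ lam mu : ℝ, ∀ s ∈ I, 1 / b s ^ 2 = -s ^ 2 + lam * s + mu) ↔
      ∀ s ∈ I, b s ^ 4 + 3 * deriv b s ^ 2 - b s * deriv (deriv b) s = 0 := by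
  have hd : ∀ s ∈ I, HasDerivAt b (deriv b s) s := fun s hs =>
    ((hb.contDiffAt (hIo.mem_nhds hs)).differentiableAt two_ne_zero).hasDerivAt
  have hd₂ : ∀ s ∈ I, HasDerivAt (deriv b) (deriv (deriv b) s) s := fun s hs =>
    (hb.differentiableAt_deriv_of_isOpen hIo hs).hasDerivAt
  have hu : ∀ s ∈ I, HasDerivAt (fun x => 1 / b x ^ 2) (-2 * deriv b s / b s ^ 3) s := by
    intro s hs
    refine ((hasDerivAt_const s 1).div ((hd s hs).fun_pow 2)
      (pow_ne_zero 2 (hb0 s hs))).congr_deriv ?_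
    field_simp [hb0 s hs]
    ring
  have hu' : ∀ s ∈ I, HasDerivAt (fun x => -2 * deriv b x / b x ^ 3)
      (-2 * (deriv (deriv b) s * b s - 3 * deriv b s ^ 2) / b s ^ 4) s := by
    intro s hs
    refine (((hd₂ s hs).const_mul (-2)).div ((hd s hs).fun_pow 3)
      (pow_ne_zero 3 (hb0 s hs))).congr_deriv ?_
    field_simp [hb0 s hs]
    ring
  have hquad := hIo.second_deriv_eq_const_iff_exists_quadratic (-1) hIc hu hu'
  simp only [neg_one_mul] at hquad
  rw [← hquad]
  refine forall₂_congr fun s hs => ?_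
  field_simp [hb0 s hs]
  constructor <;> intro h <;> linear_combination h

end

theorem flat_T2_invariant_equidistant_general
    (I : Set ℝ) (hIo : IsOpen I) (hIc : I.OrdConnected)
    (b : ℝ → ℝ) (hb : ContDiffOn ℝ 2 b I) (hbpos : ∀ s ∈ I, 0 < b s) :
    (GaussZero I Set.univ (fun s t => (s, t, log (b s))) ↔
      ∃ lam mu : ℝ, ∀ s ∈ I, 1 / (b s) ^ 2 = -s ^ 2 + lam * s + mu) ∧
    (GaussZero I Set.univ (fun s t => (s, t, log (b s))) ↔
      ∀ s ∈ I, (b s) ^ 4 + 3 * (deriv b s) ^ 2 - b s * deriv (deriv b) s = 0) := by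
  have hb0 : ∀ s ∈ I, b s ≠ 0 := fun s hs => (hbpos s hs).ne'
  have hgauss := gaussZero_equidistantSurface_iff hIo hb hb0 Set.univ_nonempty
  exact ⟨hgauss.trans (exists_one_div_sq_eq_quadratic_iff hIo hIc.isPreconnected hb hb0).symm,
    hgauss⟩

/-- The surface `X(s,t) = (s, t, log b(s))` has zero Gaussian curvature
iff `1/b² = -s² + λs + μ`, equivalently iff `b⁴ + 3b'² - b·b'' = 0` on `I`. -/
theorem flat_T2_invariant_equidistant
    (I : Set ℝ) (hIo : IsOpen I) (hIne : I.Nonempty) (hIc : I.OrdConnected)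
    (b : ℝ → ℝ) (hb : ContDiffOn ℝ 2 b I) (hbpos : ∀ s ∈ I, 0 < b s) :
    (GaussZero I Set.univ (fun s t => (s, t, log (b s))) ↔
      ∃ lam mu : ℝ, ∀ s ∈ I, 1 / (b s) ^ 2 = -s ^ 2 + lam * s + mu) ∧
    (GaussZero I Set.univ (fun s t => (s, t, log (b s))) ↔
      ∀ s ∈ I, (b s) ^ 4 + 3 * (deriv b s) ^ 2 - b s * deriv (deriv b) s = 0) :=
  flat_T2_invariant_equidistant_general I hIo hIc b hb hbpos
end
end
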